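/- Let E, Z be Banach spaces, D a normed linear space, K ⊆ Z a closed convex cone, X ⊆ E compact, Y ⊆ D, and g : X × Y → Z such that g(·, y) is continuous on X for every y ∈ Y. Then ȳ ∈ Y satisfies ∃ x ∈ X with g(x, ȳ) ⪯_K 0 if and only if inf_{x∈X}⟨u*, g(x, ȳ)⟩ ≤ 0 for every u* ∈ K⁺ with ‖u*‖ = 1. -/

import Mathlib

/-!
If no `x ∈ X` has `g x ȳ ∈ -K`, then `0` lies outside `C = g(X, ȳ) + K`, which is closed
(compact plus closed) and convex (by `K`-convexity of `g(·, ȳ)`). A functional strictly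
separating `0` from `C` is bounded below on a translate of the cone `K`, hence lies in `K⁺`;
normalised, its infimum over `g(X, ȳ)` is bounded away from `0`.
-/

open Pointwise

section Cone

variable {Z : Type*} [AddCommGroup Z] [Module ℝ Z] {K : Set Z}

theorem add_mem_of_convex_of_smul_mem (hKconv : Convex ℝ K)
    (hKcone : ∀ c : ℝ, 0 ≤ c → ∀ z ∈ K, c • z ∈ K) {a b : Z} (ha : a ∈ K) (hb : b ∈ K) :
    a + b ∈ K := by
  have hmid := hKcone 2 zero_le_two _ <|
    hKconv ha hb (by norm_num : (0 : ℝ) ≤ 1 / 2) (by norm_num : (0 : ℝ) ≤ 1 / 2) (by norm_num)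
  have htwo : (2 : ℝ) • ((1 / 2 : ℝ) • a + (1 / 2 : ℝ) • b) = a + b := by
    rw [smul_add, smul_smul, smul_smul]; norm_num
  rwa [htwo] at hmid

theorem convex_image_add_of_cone {E : Type*} [AddCommGroup E] [Module ℝ E] {X : Set E}
    (hX : Convex ℝ X) (hKconv : Convex ℝ K) (hKcone : ∀ c : ℝ, 0 ≤ c → ∀ z ∈ K, c • z ∈ K)
    {φ : E → Z}
    (hφ : ∀ x₁ ∈ X, ∀ x₂ ∈ X, ∀ t ∈ Set.Icc (0 : ℝ) 1,
      t • φ x₁ + (1 - t) • φ x₂ - φ (t • x₁ + (1 - t) • x₂) ∈ K) :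
    Convex ℝ (φ '' X + K) := by
  rintro _ ⟨_, ⟨x₁, hx₁, rfl⟩, k₁, hk₁, rfl⟩ _ ⟨_, ⟨x₂, hx₂, rfl⟩, k₂, hk₂, rfl⟩ a b ha hb hab
  obtain rfl : b = 1 - a := by linarith
  have hadd {a b : Z} : a ∈ K → b ∈ K → a + b ∈ K :=
    add_mem_of_convex_of_smul_mem hKconv hKcone
  refine ⟨φ (a • x₁ + (1 - a) • x₂), ⟨_, hX hx₁ hx₂ ha hb hab, rfl⟩,
    (a • φ x₁ + (1 - a) • φ x₂ - φ (a • x₁ + (1 - a) • x₂)) + (a • k₁ + (1 - a) • k₂),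
    hadd (hφ x₁ hx₁ x₂ hx₂ a ⟨ha, by linarith⟩)
      (hadd (hKcone a ha _ hk₁) (hKcone _ hb _ hk₂)), ?_⟩
  simp only [smul_add]
  abel

theorem nonneg_on_cone_of_le_apply_add (hKcone : ∀ c : ℝ, 0 ≤ c → ∀ z ∈ K, c • z ∈ K)
    (f : Z →ₗ[ℝ] ℝ) {s : Z} {c : ℝ} (hbdd : ∀ k ∈ K, c ≤ f (s + k)) {k : Z} (hk : k ∈ K) :
    0 ≤ f k := by
  by_contra! hneg
  set t := (|f s - c| + 1) / -f k
  have ht : 0 ≤ t := div_nonneg (by positivity) (by linarith)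
  have htk : t * f k = -(|f s - c| + 1) := by
    rw [div_mul_eq_mul_div, div_neg, mul_div_assoc, div_self hneg.ne, mul_one]
  have hle := hbdd _ (hKcone t ht k hk)
  rw [map_add, map_smul, smul_eq_mul, htk] at hle
  linarith [le_abs_self (f s - c)]

end Cone

theorem exists_unit_dual_separating_zero_of_notMem_add_cone {Z : Type*} [NormedAddCommGroup Z]
    [NormedSpace ℝ Z] {K S : Set Z} (hK : IsClosed K) (hK0 : (0 : Z) ∈ K)
    (hKcone : ∀ c : ℝ, 0 ≤ c → ∀ z ∈ K, c • z ∈ K) (hS : IsCompact S) (hSne : S.Nonempty)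
    (hconv : Convex ℝ (S + K)) (h0 : (0 : Z) ∉ S + K) :
    ∃ u : Z →L[ℝ] ℝ, (∀ z ∈ K, 0 ≤ u z) ∧ ‖u‖ = 1 ∧ ∃ δ > 0, ∀ s ∈ S, δ ≤ u s := by
  obtain ⟨f, c, hf0, hfC⟩ :=
    geometric_hahn_banach_point_closed hconv (hK.add_left_of_isCompact hS) h0
  rw [map_zero] at hf0
  obtain ⟨s₀, hs₀⟩ := hSne
  have hfS : ∀ s ∈ S, c < f s := fun s hs => hfC _ (by simpa using Set.add_mem_add hs hK0)
  have hfK : ∀ z ∈ K, 0 ≤ f z := fun z hz =>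
    nonneg_on_cone_of_le_apply_add hKcone (f : Z →ₗ[ℝ] ℝ)
      (fun k hk => (hfC _ (Set.add_mem_add hs₀ hk)).le) hz
  have hf : f ≠ 0 := by
    rintro rfl
    exact (hf0.trans (hfS s₀ hs₀)).false
  refine ⟨‖f‖⁻¹ • f, fun z hz => mul_nonneg (by positivity) (hfK z hz),
    norm_smul_inv_norm hf, ‖f‖⁻¹ * c, by positivity, fun s hs => ?_⟩
  exact mul_le_mul_of_nonneg_left (hfS s hs).le (by positivity)

theorem stmt_13_general
    {E Z D : Type*} [NormedAddCommGroup E] [NormedSpace ℝ E]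
    [NormedAddCommGroup Z] [NormedSpace ℝ Z]
    (K : Set Z) (hKclosed : IsClosed K) (hKconv : Convex ℝ K)
    (hKcone : ∀ c : ℝ, 0 ≤ c → ∀ z ∈ K, c • z ∈ K)
    (X : Set E) (hX : Convex ℝ X) (hXcomp : IsCompact X) (hXne : X.Nonempty)
    (Y : Set D)
    (g : E → D → Z)
    (hgcont : ∀ y ∈ Y, ContinuousOn (fun x => g x y) X)
    (hgconv : ∀ y ∈ Y, ∀ x₁ ∈ X, ∀ x₂ ∈ X, ∀ t ∈ Set.Icc (0:ℝ) 1,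
      t • g x₁ y + (1 - t) • g x₂ y - g (t • x₁ + (1 - t) • x₂) y ∈ K)
    (Kplus : Set (Z →L[ℝ] ℝ)) (hKplus : Kplus = {u | ∀ z ∈ K, 0 ≤ u z})
    (yb : D) (hyb : yb ∈ Y) :
    (∃ x ∈ X, -g x yb ∈ K)
    ↔
    (∀ u ∈ Kplus, ‖u‖ = 1 →
      sInf ((fun x => ((u (g x yb) : ℝ) : EReal)) '' X) ≤ (0 : EReal)) := by
  subst hKplus
  constructor
  · rintro ⟨x, hx, hxK⟩ u hu -
    have hux : u (g x yb) ≤ 0 := by simpa using hu _ hxK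
    exact (sInf_le (Set.mem_image_of_mem _ hx)).trans (EReal.coe_nonpos.mpr hux)
  · intro hall
    by_contra! hno
    obtain ⟨x₀, hx₀⟩ := hXne
    have hK0 : (0 : Z) ∈ K := by
      simpa using hgconv yb hyb x₀ hx₀ x₀ hx₀ 0 ⟨le_rfl, zero_le_one⟩
    have h0 : (0 : Z) ∉ (fun x => g x yb) '' X + K := by
      rintro ⟨_, ⟨x, hx, rfl⟩, k, hk, hsum⟩
      exact hno x hx (by rwa [neg_eq_of_add_eq_zero_right hsum])
    obtain ⟨u, huK, hu, δ, hδ, hδu⟩ := exists_unit_dual_separating_zero_of_notMem_add_cone hKclosed hK0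
      hKcone (hXcomp.image_of_continuousOn (hgcont yb hyb)) ⟨_, x₀, hx₀, rfl⟩
      (convex_image_add_of_cone hX hKconv hKcone (hgconv yb hyb)) h0
    have hδle : (δ : EReal) ≤ sInf ((fun x => ((u (g x yb) : ℝ) : EReal)) '' X) :=
      le_sInf <| by
        rintro _ ⟨x, hx, rfl⟩
        exact EReal.coe_le_coe_iff.mpr (hδu _ ⟨x, hx, rfl⟩)
    exact hδ.not_ge (EReal.coe_nonpos.mp (hδle.trans (hall u huK hu)))

/-- dual characterization of feasibility: `P(ȳ)` is feasible iff
`inf_{x∈X} ⟨u*, g(x,ȳ)⟩ ≤ 0` for every unit-norm `u* ∈ K⁺`. -/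
theorem stmt_13
    {E Z D : Type*} [NormedAddCommGroup E] [NormedSpace ℝ E] [CompleteSpace E]
    [NormedAddCommGroup Z] [NormedSpace ℝ Z] [CompleteSpace Z]
    [NormedAddCommGroup D] [NormedSpace ℝ D]
    (K : Set Z) (hKclosed : IsClosed K) (hKconv : Convex ℝ K)
    (hKcone : ∀ c : ℝ, 0 ≤ c → ∀ z ∈ K, c • z ∈ K)
    (X : Set E) (hX : Convex ℝ X) (hXcomp : IsCompact X) (hXne : X.Nonempty)
    (Y : Set D)
    (g : E → D → Z)
    (hgcont : ∀ y ∈ Y, ContinuousOn (fun x => g x y) X)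
    (hgconv : ∀ y ∈ Y, ∀ x₁ ∈ X, ∀ x₂ ∈ X, ∀ t ∈ Set.Icc (0:ℝ) 1,
      t • g x₁ y + (1 - t) • g x₂ y - g (t • x₁ + (1 - t) • x₂) y ∈ K)
    (Kplus : Set (Z →L[ℝ] ℝ)) (hKplus : Kplus = {u | ∀ z ∈ K, 0 ≤ u z})
    (yb : D) (hyb : yb ∈ Y) :
    (∃ x ∈ X, -g x yb ∈ K)
    ↔
    (∀ u ∈ Kplus, ‖u‖ = 1 →
      sInf ((fun x => ((u (g x yb) : ℝ) : EReal)) '' X) ≤ (0 : EReal)) :=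
  stmt_13_general K hKclosed hKconv hKcone X hX hXcomp hXne Y g hgcont hgconv Kplus hKplus yb hyb
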